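/- arXiv:2002.10813 — 3 statements merged into one kernel-verified Lean document; each statement's English description precedes it below -/
import Mathlib

section
/- For polynomials ψ of degree at most N and real numbers 0 ≤ r ≤ s, there is a constant C independent of N such that ‖ψ‖_{s,w} ≤ C·N^{2(s−r)}·‖ψ‖_{r,w} (inverse inequality in weighted Sobolev norms). -/
/-!
For `-1 < a` write `J_a(u) = ∫_{-1}^{1} u(x) (1 - x²)^a dx`. The Jacobi operator
`A_a p = 2(a+1) x p' - (1 - x²) p''` satisfies `J_a(A_a p · q) = J_{a+1}(p' q')` (integration by
parts), so it is symmetric for the inner product `J_a(u v)` on polynomials of degree `≤ N`. It is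
triangular in the monomial basis, so its eigenvalues there are `n(n + 2a + 1) ≤ N(N + 2a + 1)`,
whence `J_{a+1}(p'²) ≤ N(N + 2a + 1) J_a(p²)`. In the other direction, splitting
`1 = (1 - x²) + x²` and integrating `(x q²)'` by parts, the previous bound at level `a + 1`
gives `J_a(q²) ≤ C N² J_{a+1}(q²)`. Applied to `q = p'` the two bounds give the weighted Markov
inequality `J_a(p'²) ≤ C N⁴ J_a(p²)`, and iterating it over the derivatives of `p` gives the
claim.
-/

/-- The weighted Sobolev norm `‖f‖_{k,w}` (integer order `k`) for the Jacobi weight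
`w(x) = (1−x²)^μ`: `‖f‖_{k,w}² = Σ_{j≤k} ∫ (f^{(j)})² w`. -/
noncomputable def wSobNorm (μ : ℝ) (k : ℕ) (f : ℝ → ℝ) : ℝ :=
  Real.sqrt (∑ j ∈ Finset.range (k + 1),
    ∫ s in (-1:ℝ)..1, (iteratedDeriv j f s) ^ 2 * (1 - s ^ 2) ^ μ)

open MeasureTheory Set Polynomial Module.End

theorem LinearMap.IsSymmetric.inner_map_self_le {E : Type*} [NormedAddCommGroup E]
    [InnerProductSpace ℝ E] [FiniteDimensional ℝ E] {T : E →ₗ[ℝ] E} (hT : T.IsSymmetric)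
    {c : ℝ} (hc : ∀ μ, HasEigenvalue T μ → μ ≤ c) (x : E) :
    inner ℝ (T x) x ≤ c * inner ℝ x x := by
  let B := hT.eigenvectorBasis rfl
  rw [← B.repr.inner_map_map (T x) x, ← B.repr.inner_map_map x x, PiLp.inner_apply,
    PiLp.inner_apply, Finset.mul_sum]
  refine Finset.sum_le_sum fun i _ => ?_
  rw [hT.eigenvectorBasis_apply_self_apply]
  simp only [RCLike.inner_apply, conj_trivial]
  have := mul_le_mul_of_nonneg_right (hc _ (hT.hasEigenvalue_eigenvalues rfl i))
    (mul_self_nonneg ((B.repr x).ofLp i))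
  simp only [RCLike.ofReal_real_eq_id] at this ⊢
  linarith

lemma sum_range_succ_le_of_le_mul {f : ℕ → ℝ} {L : ℝ} (hf : ∀ j, 0 ≤ f j) (hL : 1 ≤ L)
    (hstep : ∀ j, f (j + 1) ≤ L * f j) (r s : ℕ) :
    ∑ j ∈ Finset.range (s + 1), f j ≤
      (s + 1) * L ^ (s - r) * ∑ j ∈ Finset.range (r + 1), f j := by
  have hpow : ∀ i j, f (j + i) ≤ L ^ i * f j := fun i j =>
    le_geom (u := fun i => f (j + i)) (by linarith) i fun k _ => hstep (j + k)
  have hterm : ∀ j ∈ Finset.range (s + 1),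
      f j ≤ L ^ (s - r) * ∑ j ∈ Finset.range (r + 1), f j := by
    intro j hj
    rw [Finset.mem_range] at hj
    calc f j = f (min j r + (j - min j r)) := by rw [Nat.add_sub_cancel' (min_le_left j r)]
      _ ≤ L ^ (j - min j r) * f (min j r) := hpow _ _
      _ ≤ L ^ (s - r) * ∑ j ∈ Finset.range (r + 1), f j := by
        refine mul_le_mul (pow_le_pow_right₀ hL (by omega)) ?_ (hf _) (by positivity)
        exact Finset.single_le_sum (fun i _ => hf i) (by simp only [Finset.mem_range]; omega)
  calc ∑ j ∈ Finset.range (s + 1), f j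
      ≤ (Finset.range (s + 1)).card • (L ^ (s - r) * ∑ j ∈ Finset.range (r + 1), f j) :=
        Finset.sum_le_card_nsmul _ _ _ hterm
    _ = _ := by rw [Finset.card_range, nsmul_eq_mul]; push_cast; ring

lemma mem_degreeLT_succ_iff {R : Type*} [Semiring R] {N : ℕ} {p : R[X]} :
    p ∈ degreeLT R (N + 1) ↔ p.natDegree ≤ N := by
  rw [mem_degreeLT, degree_lt_iff_coeff_zero, natDegree_le_iff_coeff_eq_zero]
  exact forall_congr' fun m => by rw [Nat.succ_le_iff]

lemma iteratedDeriv_eval (p : ℝ[X]) (j : ℕ) :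
    iteratedDeriv j (fun x => p.eval x) = fun x => (derivative^[j] p).eval x := by
  induction j generalizing p with
  | zero => simp
  | succ j ih =>
    rw [iteratedDeriv_succ', Function.iterate_succ_apply, ← ih]
    congr 1
    exact funext fun x => Polynomial.deriv p

noncomputable def jacobiIntegral (a : ℝ) (u : ℝ[X]) : ℝ :=
  ∫ x in (-1 : ℝ)..1, u.eval x * (1 - x ^ 2) ^ a

section JacobiIntegral

variable {a : ℝ}

lemma intervalIntegrable_one_sub_sq_rpow (ha : -1 < a) :
    IntervalIntegrable (fun x : ℝ => (1 - x ^ 2) ^ a) volume (-1) 1 := by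
  have hfactor : EqOn (fun x : ℝ => (1 - x ^ 2) ^ a) (fun x => (1 + x) ^ a * (1 - x) ^ a)
      (uIoo (-1) 1) := by
    intro x hx
    rw [uIoo_of_le (by norm_num)] at hx
    dsimp only
    rw [← Real.mul_rpow (by linarith [hx.1]) (by linarith [hx.2])]
    congr 1
    ring
  have hpow : IntervalIntegrable (fun x : ℝ => x ^ a) volume 0 1 :=
    intervalIntegral.intervalIntegrable_rpow' ha
  refine (intervalIntegrable_congr_uIoo hfactor).2 (IntervalIntegrable.trans (b := 0) ?_ ?_)
  · have h : IntervalIntegrable (fun x : ℝ => (1 + x) ^ a) volume (-1) 0 := by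
      simpa [add_comm] using hpow.comp_add_right 1
    refine h.mul_continuousOn (ContinuousOn.rpow_const (by fun_prop) fun x hx => Or.inl ?_)
    rw [uIcc_of_le (by norm_num)] at hx
    exact (by linarith [hx.2] : (0 : ℝ) < 1 - x).ne'
  · have h : IntervalIntegrable (fun x : ℝ => (1 - x) ^ a) volume 0 1 := by
      simpa using (hpow.comp_sub_left 1).symm
    refine h.continuousOn_mul (ContinuousOn.rpow_const (by fun_prop) fun x hx => Or.inl ?_)
    rw [uIcc_of_le (by norm_num)] at hx
    exact (by linarith [hx.1] : (0 : ℝ) < 1 + x).ne'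

lemma intervalIntegrable_eval_mul_one_sub_sq_rpow (ha : -1 < a) (u : ℝ[X]) :
    IntervalIntegrable (fun x => u.eval x * (1 - x ^ 2) ^ a) volume (-1) 1 :=
  (intervalIntegrable_one_sub_sq_rpow ha).continuousOn_mul u.continuous.continuousOn

lemma jacobiIntegral_add (ha : -1 < a) (u v : ℝ[X]) :
    jacobiIntegral a (u + v) = jacobiIntegral a u + jacobiIntegral a v := by
  simp only [jacobiIntegral, eval_add, add_mul]
  exact intervalIntegral.integral_add (intervalIntegrable_eval_mul_one_sub_sq_rpow ha u)
    (intervalIntegrable_eval_mul_one_sub_sq_rpow ha v)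

lemma jacobiIntegral_C_mul (c : ℝ) (u : ℝ[X]) :
    jacobiIntegral a (C c * u) = c * jacobiIntegral a u := by
  simp only [jacobiIntegral, eval_mul, eval_C, mul_assoc, intervalIntegral.integral_const_mul]

lemma jacobiIntegral_sub (ha : -1 < a) (u v : ℝ[X]) :
    jacobiIntegral a (u - v) = jacobiIntegral a u - jacobiIntegral a v := by
  simp only [jacobiIntegral, eval_sub, sub_mul]
  exact intervalIntegral.integral_sub (intervalIntegrable_eval_mul_one_sub_sq_rpow ha u)
    (intervalIntegrable_eval_mul_one_sub_sq_rpow ha v)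

lemma jacobiIntegral_one_sub_X_sq_mul (a : ℝ) (u : ℝ[X]) :
    jacobiIntegral a ((1 - X ^ 2) * u) = jacobiIntegral (a + 1) u := by
  refine intervalIntegral.integral_congr_Ioo_of_le (by norm_num) fun x hx => ?_
  have : 1 - x ^ 2 ≠ 0 := by nlinarith [hx.1, hx.2]
  simp only [eval_mul, eval_sub, eval_one, eval_pow, eval_X, Real.rpow_add_one this]
  ring

lemma jacobiIntegral_mul_self_nonneg (a : ℝ) (u : ℝ[X]) : 0 ≤ jacobiIntegral a (u * u) := by
  refine intervalIntegral.integral_nonneg (by norm_num) fun x hx => ?_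
  have : 0 ≤ 1 - x ^ 2 := by nlinarith [hx.1, hx.2]
  rw [eval_mul]
  exact mul_nonneg (mul_self_nonneg _) (Real.rpow_nonneg this a)

lemma jacobiIntegral_mul_self_pos (ha : -1 < a) {u : ℝ[X]} (hu : u ≠ 0) :
    0 < jacobiIntegral a (u * u) := by
  have hint := intervalIntegrable_eval_mul_one_sub_sq_rpow ha (u * u)
  refine (intervalIntegral.integral_pos_iff_support_of_nonneg_ae' ?_ hint).2 ⟨by norm_num, ?_⟩
  · filter_upwards [ae_restrict_mem measurableSet_uIoc] with x hx
    rw [uIoc_of_le (by norm_num)] at hx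
    have : 0 ≤ 1 - x ^ 2 := by nlinarith [hx.1, hx.2]
    rw [Pi.zero_apply, eval_mul]
    exact mul_nonneg (mul_self_nonneg _) (Real.rpow_nonneg this a)
  · have hsub : Ioo (-1 : ℝ) 1 \ {x | u.IsRoot x} ⊆
        Function.support (fun x => (u * u).eval x * (1 - x ^ 2) ^ a) ∩ Ioc (-1) 1 := by
      rintro x ⟨hx, hroot⟩
      have : 0 < 1 - x ^ 2 := by nlinarith [hx.1, hx.2]
      refine ⟨?_, Ioo_subset_Ioc_self hx⟩
      simp only [Function.mem_support, eval_mul]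
      exact mul_ne_zero (mul_self_ne_zero.2 hroot) (Real.rpow_pos_of_pos this a).ne'
    refine lt_of_lt_of_le ?_ (measure_mono hsub)
    rw [measure_sdiff_null ((finite_setOfPred_isRoot hu).measure_zero _), Real.volume_Ioo]
    norm_num

lemma two_mul_mul_jacobiIntegral_mul_le (ha : -1 < a) (t : ℝ) (f g : ℝ[X]) :
    2 * t * jacobiIntegral a (f * g) ≤
      t ^ 2 * jacobiIntegral a (f * f) + jacobiIntegral a (g * g) := by
  have h := jacobiIntegral_mul_self_nonneg a (C t * f - g)
  have hexpand : (C t * f - g) * (C t * f - g) =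
      C (t ^ 2) * (f * f) - C (2 * t) * (f * g) + g * g := by
    simp only [map_pow, map_mul, map_ofNat]; ring
  rw [hexpand, jacobiIntegral_add ha, jacobiIntegral_sub ha, jacobiIntegral_C_mul,
    jacobiIntegral_C_mul] at h
  linarith

/-- Integration by parts against `(1 - x²)^(a+1)`, whose boundary terms vanish. -/
lemma jacobiIntegral_add_one_derivative (ha : -1 < a) (u : ℝ[X]) :
    jacobiIntegral (a + 1) (derivative u) = 2 * (a + 1) * jacobiIntegral a (X * u) := by
  have hderiv : ∀ x ∈ Ioo (-1 : ℝ) 1, HasDerivAt (fun x => u.eval x * (1 - x ^ 2) ^ (a + 1))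
      ((((1 - X ^ 2) * derivative u - C (2 * (a + 1)) * (X * u)).eval x) * (1 - x ^ 2) ^ a) x := by
    intro x hx
    have hx0 : 1 - x ^ 2 ≠ 0 := by nlinarith [hx.1, hx.2]
    have hw : HasDerivAt (fun y : ℝ => (1 - y ^ 2) ^ (a + 1))
        (-(2 * x * (a + 1) * (1 - x ^ 2) ^ a)) x := by
      simpa using ((hasDerivAt_pow 2 x).const_sub 1).rpow_const (p := a + 1) (Or.inl hx0)
    refine ((u.hasDerivAt x).mul hw).congr_deriv ?_
    simp only [eval_mul, eval_sub, eval_one, eval_pow, eval_X, eval_C, Real.rpow_add_one hx0]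
    ring
  have hboundary : ∀ c : ℝ, c ^ 2 = 1 →
      Filter.Tendsto (fun x => u.eval x * (1 - x ^ 2) ^ (a + 1)) (nhds c) (nhds 0) := by
    intro c hc
    have hcont : Continuous (fun x => u.eval x * (1 - x ^ 2) ^ (a + 1)) :=
      u.continuous.mul ((continuous_const.sub (continuous_pow 2)).rpow_const
        fun _ => Or.inr (by linarith))
    simpa [hc, Real.zero_rpow (by linarith : a + 1 ≠ 0)] using hcont.tendsto c
  have h := intervalIntegral.integral_eq_sub_of_hasDerivAt_of_tendsto (by norm_num) hderiv
    (intervalIntegrable_eval_mul_one_sub_sq_rpow ha _)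
    ((hboundary (-1) (by norm_num)).mono_left nhdsWithin_le_nhds)
    ((hboundary 1 (by norm_num)).mono_left nhdsWithin_le_nhds)
  rw [sub_self, ← jacobiIntegral, jacobiIntegral_sub ha, jacobiIntegral_one_sub_X_sq_mul,
    jacobiIntegral_C_mul] at h
  linarith

/-- The Sturm–Liouville operator `p ↦ -(1 - x²)^(-a) ((1 - x²)^(a + 1) p')'`. -/
noncomputable def jacobiOperator (a : ℝ) : ℝ[X] →ₗ[ℝ] ℝ[X] :=
  LinearMap.mulLeft ℝ (C (2 * (a + 1)) * X) ∘ₗ derivative -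
    LinearMap.mulLeft ℝ (1 - X ^ 2) ∘ₗ derivative ∘ₗ derivative

lemma jacobiOperator_apply (a : ℝ) (p : ℝ[X]) :
    jacobiOperator a p =
      C (2 * (a + 1)) * X * derivative p - (1 - X ^ 2) * derivative (derivative p) :=
  rfl

lemma jacobiIntegral_jacobiOperator_mul (ha : -1 < a) (p q : ℝ[X]) :
    jacobiIntegral a (jacobiOperator a p * q) =
      jacobiIntegral (a + 1) (derivative p * derivative q) := by
  have h := jacobiIntegral_add_one_derivative ha (derivative p * q)
  have hsplit : jacobiOperator a p * q = C (2 * (a + 1)) * (X * (derivative p * q)) -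
      (1 - X ^ 2) * (derivative (derivative p) * q) := by
    rw [jacobiOperator_apply]; ring
  rw [derivative_mul, jacobiIntegral_add (by linarith)] at h
  rw [hsplit, jacobiIntegral_sub ha, jacobiIntegral_C_mul, jacobiIntegral_one_sub_X_sq_mul]
  linarith

lemma coeff_jacobiOperator (a : ℝ) (p : ℝ[X]) (m : ℕ) :
    (jacobiOperator a p).coeff m =
      m * (m + 2 * a + 1) * p.coeff m - (m + 1) * (m + 2) * p.coeff (m + 2) := by
  rw [jacobiOperator_apply, sub_mul, one_mul, mul_assoc, coeff_sub, coeff_sub, coeff_C_mul,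
    coeff_X_pow_mul', coeff_derivative, coeff_derivative]
  rcases m with _ | _ | k <;> simp [coeff_derivative] <;> ring

lemma natDegree_jacobiOperator_le (a : ℝ) (p : ℝ[X]) :
    (jacobiOperator a p).natDegree ≤ p.natDegree := by
  rw [natDegree_le_iff_coeff_eq_zero]
  intro m hm
  rw [coeff_jacobiOperator, coeff_eq_zero_of_natDegree_lt hm,
    coeff_eq_zero_of_natDegree_lt (by omega)]
  ring

/-- The eigenvalue is read off the leading coefficient. -/
lemma eq_of_jacobiOperator_eq_smul {θ : ℝ} {p : ℝ[X]} (hp : p ≠ 0)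
    (h : jacobiOperator a p = θ • p) :
    θ = p.natDegree * (p.natDegree + 2 * a + 1) := by
  have hcoeff := congrArg (coeff · p.natDegree) h
  simp only [coeff_jacobiOperator, coeff_smul, smul_eq_mul, mul_zero, sub_zero,
    coeff_eq_zero_of_natDegree_lt (by omega : p.natDegree < p.natDegree + 2)] at hcoeff
  exact (mul_right_cancel₀ (leadingCoeff_ne_zero.2 hp) hcoeff).symm

noncomputable abbrev jacobiInnerCore (ha : -1 < a) (n : ℕ) :
    InnerProductSpace.Core ℝ (degreeLT ℝ n) where
  inner u v := jacobiIntegral a (u * v)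
  conj_inner_symm u v := by simp only [conj_trivial, mul_comm]
  re_inner_nonneg u := jacobiIntegral_mul_self_nonneg a u
  definite u hu := by
    by_contra hne
    exact (jacobiIntegral_mul_self_pos ha (by simpa using hne)).ne' hu
  add_left u v w := by simp only [Submodule.coe_add, add_mul, jacobiIntegral_add ha]
  smul_left u v r := by
    simp only [Submodule.coe_smul, smul_eq_C_mul, mul_assoc, jacobiIntegral_C_mul, conj_trivial]

lemma jacobiIntegral_derivative_mul_self_le (ha : -1 < a) {N : ℕ} {p : ℝ[X]}
    (hp : p.natDegree ≤ N) :
    jacobiIntegral (a + 1) (derivative p * derivative p) ≤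
      N * (N + 2 * a + 1) * jacobiIntegral a (p * p) := by
  let core := jacobiInnerCore ha (N + 1)
  let _ : NormedAddCommGroup (degreeLT ℝ (N + 1)) := core.toNormedAddCommGroup
  let _ : InnerProductSpace ℝ (degreeLT ℝ (N + 1)) := .ofCore core.toCore
  have hmaps : ∀ q ∈ degreeLT ℝ (N + 1), jacobiOperator a q ∈ degreeLT ℝ (N + 1) :=
    fun q hq => mem_degreeLT_succ_iff.2
      ((natDegree_jacobiOperator_le a q).trans (mem_degreeLT_succ_iff.1 hq))
  let T := (jacobiOperator a).restrict hmaps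
  have hT : T.IsSymmetric := fun u v => by
    change jacobiIntegral a (jacobiOperator a u * v) = jacobiIntegral a (u * jacobiOperator a v)
    rw [mul_comm (u : ℝ[X]), jacobiIntegral_jacobiOperator_mul ha,
      jacobiIntegral_jacobiOperator_mul ha, mul_comm]
  have heig : ∀ θ, HasEigenvalue T θ → θ ≤ N * (N + 2 * a + 1) := by
    intro θ hθ
    obtain ⟨v, hv⟩ := hθ.exists_hasEigenvector
    have hv0 : (v : ℝ[X]) ≠ 0 := by simpa using hv.2
    rw [eq_of_jacobiOperator_eq_smul hv0 (congrArg Subtype.val hv.apply_eq_smul)]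
    rcases (mem_degreeLT_succ_iff.1 v.2).eq_or_lt with hN | hN
    · rw [hN]
    · have hN' : ((v : ℝ[X]).natDegree : ℝ) + 1 ≤ N := by exact_mod_cast hN
      nlinarith
  have h := hT.inner_map_self_le heig ⟨p, mem_degreeLT_succ_iff.2 hp⟩
  rwa [← jacobiIntegral_jacobiOperator_mul ha]

lemma sq_mul_jacobiIntegral_mul_self_le (ha : -1 < a) {m : ℕ} {q : ℝ[X]}
    (hq : q.natDegree ≤ m) :
    (a + 1) ^ 2 * jacobiIntegral a (q * q) ≤
      ((a + 1) * (a + 2) + m * (m + 2 * a + 3)) * jacobiIntegral (a + 1) (q * q) := by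
  have ha' : -1 < a + 1 := by linarith
  have hsplit : jacobiIntegral a (q * q) =
      jacobiIntegral (a + 1) (q * q) + jacobiIntegral a (X * q * (X * q)) := by
    rw [← jacobiIntegral_one_sub_X_sq_mul, ← jacobiIntegral_add ha]
    congr 1
    ring
  have hparts : jacobiIntegral (a + 1) (q * q) + 2 * jacobiIntegral (a + 1) (X * q * derivative q) =
      2 * (a + 1) * jacobiIntegral a (X * q * (X * q)) := by
    have h := jacobiIntegral_add_one_derivative ha (X * (q * q))
    rw [show derivative (X * (q * q)) = q * q + C 2 * (X * q * derivative q) by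
        simp only [derivative_mul, derivative_X, map_ofNat]; ring,
      jacobiIntegral_add ha', jacobiIntegral_C_mul] at h
    rw [h, show X * (X * (q * q)) = X * q * (X * q) by ring]
  have hyoung := two_mul_mul_jacobiIntegral_mul_le ha (a + 1) (X * q) ((1 - X ^ 2) * derivative q)
  rw [show X * q * ((1 - X ^ 2) * derivative q) = (1 - X ^ 2) * (X * q * derivative q) by ring,
    show (1 - X ^ 2) * derivative q * ((1 - X ^ 2) * derivative q) =
      (1 - X ^ 2) * ((1 - X ^ 2) * (derivative q * derivative q)) by ring,
    jacobiIntegral_one_sub_X_sq_mul, jacobiIntegral_one_sub_X_sq_mul,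
    jacobiIntegral_one_sub_X_sq_mul] at hyoung
  have hE : (a + 1) ^ 2 * jacobiIntegral a (X * q * (X * q)) ≤
      (a + 1) * jacobiIntegral (a + 1) (q * q) +
        jacobiIntegral (a + 1 + 1) (derivative q * derivative q) := by
    nlinarith
  have hspec := jacobiIntegral_derivative_mul_self_le ha' hq
  rw [hsplit]
  nlinarith

theorem exists_jacobiIntegral_derivative_mul_self_le (ha : -1 < a) :
    ∃ K : ℝ, 1 ≤ K ∧ ∀ N : ℕ, 1 ≤ N → ∀ p : ℝ[X], p.natDegree ≤ N →
      jacobiIntegral a (derivative p * derivative p) ≤ K * N ^ 4 * jacobiIntegral a (p * p) := by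
  have ha1 : 0 < a + 1 := by linarith
  refine ⟨(a + 2) * (a + 3) * (2 * a + 3) / (a + 1) ^ 2, ?_, fun N hN p hp => ?_⟩
  · rw [le_div_iff₀ (by positivity)]
    nlinarith
  have hN1 : (1 : ℝ) ≤ N := by exact_mod_cast hN
  have hremove := sq_mul_jacobiIntegral_mul_self_le ha
    ((natDegree_derivative_le p).trans (by omega) : (derivative p).natDegree ≤ N)
  have hspec := jacobiIntegral_derivative_mul_self_le ha hp
  have hNN : (0 : ℝ) ≤ N * (N - 1) := mul_nonneg (by linarith) (by linarith)
  have hfirst : (a + 1) * (a + 2) + N * (N + 2 * a + 3) ≤ (a + 2) * (a + 3) * N ^ 2 := by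
    nlinarith [mul_nonneg (mul_nonneg ha1.le (by linarith : 0 ≤ a + 2)) hNN]
  have hsecond : N * (N + 2 * a + 1) ≤ (2 * a + 3) * N ^ 2 := by
    nlinarith [mul_nonneg ha1.le hNN]
  have hD := jacobiIntegral_mul_self_nonneg (a + 1) (derivative p)
  have hP := jacobiIntegral_mul_self_nonneg a p
  rw [div_mul_eq_mul_div, div_mul_eq_mul_div, le_div_iff₀ (by positivity)]
  calc jacobiIntegral a (derivative p * derivative p) * (a + 1) ^ 2
      ≤ ((a + 1) * (a + 2) + N * (N + 2 * a + 3)) *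
          jacobiIntegral (a + 1) (derivative p * derivative p) := by linarith
    _ ≤ (a + 2) * (a + 3) * N ^ 2 * ((2 * a + 3) * N ^ 2 * jacobiIntegral a (p * p)) :=
      mul_le_mul hfirst (hspec.trans (mul_le_mul_of_nonneg_right hsecond hP)) hD
        (mul_nonneg (mul_nonneg (by linarith) (by linarith)) (sq_nonneg _))
    _ = _ := by ring

end JacobiIntegral

lemma wSobNorm_eval (μ : ℝ) (k : ℕ) (p : ℝ[X]) :
    wSobNorm μ k (fun x => p.eval x) = √(∑ j ∈ Finset.range (k + 1),
      jacobiIntegral μ (derivative^[j] p * derivative^[j] p)) := by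
  simp only [wSobNorm, iteratedDeriv_eval, jacobiIntegral, eval_mul, sq]

theorem stmt4_general (μ : ℝ) (hμ : -1 < μ) (r s : ℕ) :
    ∃ C : ℝ, 0 < C ∧ ∀ N : ℕ, 2 ≤ N → ∀ p : Polynomial ℝ, p.natDegree ≤ N →
      wSobNorm μ s (fun x => p.eval x)
        ≤ C * (N : ℝ) ^ (2 * (s - r)) * wSobNorm μ r (fun x => p.eval x) := by
  obtain ⟨K, hK, hbernstein⟩ := exists_jacobiIntegral_derivative_mul_self_le hμ
  refine ⟨√((s + 1) * K ^ (s - r)), by positivity, fun N hN p hp => ?_⟩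
  have hN1 : (1 : ℝ) ≤ N := by exact_mod_cast (by omega : 1 ≤ N)
  have hsum := sum_range_succ_le_of_le_mul
    (fun j => jacobiIntegral_mul_self_nonneg μ (derivative^[j] p))
    (one_le_mul_of_one_le_of_one_le hK (one_le_pow₀ hN1))
    (fun j => by
      simpa only [Function.iterate_succ_apply'] using hbernstein N (by omega) _
        ((natDegree_iterate_derivative p j).trans (by omega))) r s
  rw [wSobNorm_eval, wSobNorm_eval]
  refine (Real.sqrt_le_sqrt hsum).trans_eq ?_
  rw [show ((s : ℝ) + 1) * (K * N ^ 4) ^ (s - r) =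
      (s + 1) * K ^ (s - r) * (N ^ (2 * (s - r))) ^ 2 by ring,
    Real.sqrt_mul (by positivity), Real.sqrt_mul (by positivity), Real.sqrt_sq (by positivity)]

/-- inverse inequality: for `0 ≤ r ≤ s` there is `C` independent of `N`
with `‖ψ‖_{s,w} ≤ C N^{2(s−r)} ‖ψ‖_{r,w}` for every polynomial `ψ` of degree `≤ N`. -/
theorem stmt4 (μ : ℝ) (hμ : -1 < μ) (hμ' : μ < 1) (r s : ℕ) (hrs : r ≤ s) :
    ∃ C : ℝ, 0 < C ∧ ∀ N : ℕ, 2 ≤ N → ∀ p : Polynomial ℝ, p.natDegree ≤ N →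
      wSobNorm μ s (fun x => p.eval x)
        ≤ C * (N : ℝ) ^ (2 * (s - r)) * wSobNorm μ r (fun x => p.eval x) :=
  stmt4_general μ hμ r s
end

section
/- Assume the orthogonal projection v̄ of v onto ℙ_N^0 with respect to A satisfies ‖v − v̄‖_{1,w} ≤ C N^{1−m}‖v‖_{m,w}, and assume there exists u^N ∈ ℙ_N with ‖u^N − v‖_{k,w} ≤ C N^{k−m}‖v‖_{m,w} for 0 ≤ k ≤ 2, and the inverse inequality ‖ψ‖_{s,w} ≤ C N^{2(s−r)}‖ψ‖_{r,w} for ψ ∈ ℙ_N, 0 ≤ r ≤ s. Then ‖v − v̄‖_{2,w} ≤ C N^{3−m}‖v‖_{m,w} for v ∈ H_w^m, m ≥ 2. -/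
/-- if the `A`-orthogonal projection `v̄ = v̄(N) ∈ ℙ_N^0` satisfies
`‖v − v̄‖_{1,w} ≤ C N^{1−m}‖v‖_{m,w}`, there exists `u^N ∈ ℙ_N` with
`‖u^N − v‖_{k,w} ≤ C N^{k−m}‖v‖_{m,w}` for `0 ≤ k ≤ 2`, and the inverse inequality
`‖ψ‖_{s,w} ≤ C N^{2(s−r)}‖ψ‖_{r,w}` holds on `ℙ_N`, then
`‖v − v̄‖_{2,w} ≤ C' N^{3−m}‖v‖_{m,w}` with `C'` independent of `N`. -/
theorem stmt7 {V : Type*} [AddCommGroup V] [Module ℝ V]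
    (n : ℕ → V → ℝ)
    (hnonneg : ∀ k x, 0 ≤ n k x)
    (htri : ∀ k (x y : V), n k (x + y) ≤ n k x + n k y)
    (hsymm : ∀ k (x : V), n k (-x) = n k x)
    (m : ℕ) (hm : 2 ≤ m) (v : V)
    (P : ℕ → Submodule ℝ V) (vbar uN : ℕ → V)
    (hvbar : ∀ N, vbar N ∈ P N) (huN : ∀ N, uN N ∈ P N)
    (C : ℝ) (hC : 0 < C)
    (h1 : ∀ N, 2 ≤ N → n 1 (v - vbar N) ≤ C * (N : ℝ) ^ ((1:ℤ) - (m:ℤ)) * n m v)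
    (h2 : ∀ N, 2 ≤ N → ∀ k, k ≤ 2 →
      n k (uN N - v) ≤ C * (N : ℝ) ^ ((k:ℤ) - (m:ℤ)) * n m v)
    (hinv : ∀ N, 2 ≤ N → ∀ ψ ∈ P N, ∀ r s : ℕ, r ≤ s →
      n s ψ ≤ C * (N : ℝ) ^ (2 * (s - r)) * n r ψ) :
    ∃ C' : ℝ, 0 < C' ∧ ∀ N, 2 ≤ N →
      n 2 (v - vbar N) ≤ C' * (N : ℝ) ^ ((3:ℤ) - (m:ℤ)) * n m v := by
  refine ⟨C + 2 * C ^ 2, by positivity, fun N hN => ?_⟩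
  have hN1 : (1:ℝ) < (N:ℝ) := by exact_mod_cast Nat.lt_of_lt_of_le one_lt_two hN
  have hN0 : (0:ℝ) < (N:ℝ) := by linarith
  have hnv : 0 ≤ n m v := hnonneg m v
  -- n 2 (v - vbar N) ≤ n 2 (uN N - v) + n 2 (uN N - vbar N)
  have key : n 2 (v - vbar N) ≤ n 2 (uN N - v) + n 2 (uN N - vbar N) := by
    have := htri 2 (-(uN N - v)) (uN N - vbar N)
    rw [hsymm] at this
    have e : -(uN N - v) + (uN N - vbar N) = v - vbar N := by abel
    rwa [e] at this
  have hA : n 2 (uN N - v) ≤ C * (N : ℝ) ^ ((2:ℤ) - (m:ℤ)) * n m v :=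
    h2 N hN 2 le_rfl
  have hmem : uN N - vbar N ∈ P N := sub_mem (huN N) (hvbar N)
  have hB : n 2 (uN N - vbar N) ≤ C * (N : ℝ) ^ (2 * (2 - 1)) * n 1 (uN N - vbar N) :=
    hinv N hN _ hmem 1 2 (by norm_num)
  have hC1 : n 1 (uN N - vbar N) ≤ n 1 (uN N - v) + n 1 (v - vbar N) := by
    have := htri 1 (uN N - v) (v - vbar N)
    have e : (uN N - v) + (v - vbar N) = uN N - vbar N := by abel
    rwa [e] at this
  have h2' : n 1 (uN N - v) ≤ C * (N : ℝ) ^ ((1:ℤ) - (m:ℤ)) * n m v :=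
    h2 N hN 1 (by norm_num)
  have h1' := h1 N hN
  have pow1 : (N : ℝ) ^ ((2:ℤ) - (m:ℤ)) ≤ (N : ℝ) ^ ((3:ℤ) - (m:ℤ)) :=
    zpow_le_zpow_right₀ hN1.le (by omega)
  have pow2 : (N : ℝ) ^ (2 * (2 - 1) : ℕ) * (N : ℝ) ^ ((1:ℤ) - (m:ℤ)) = (N : ℝ) ^ ((3:ℤ) - (m:ℤ)) := by
    norm_num
    rw [← zpow_natCast (N:ℝ) 2, ← zpow_add₀ hN0.ne']
    norm_num
    ring_nf
  have hB' : n 2 (uN N - vbar N) ≤ 2 * C ^ 2 * (N : ℝ) ^ ((3:ℤ) - (m:ℤ)) * n m v := by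
    calc n 2 (uN N - vbar N) ≤ C * (N : ℝ) ^ (2 * (2 - 1)) * n 1 (uN N - vbar N) := hB
    _ ≤ C * (N : ℝ) ^ (2 * (2 - 1)) * (C * (N : ℝ) ^ ((1:ℤ) - (m:ℤ)) * n m v + C * (N : ℝ) ^ ((1:ℤ) - (m:ℤ)) * n m v) := by
        have := hC1.trans (add_le_add h2' h1')
        apply mul_le_mul_of_nonneg_left this
        positivity
    _ = 2 * C ^ 2 * ((N : ℝ) ^ (2 * (2 - 1) : ℕ) * (N : ℝ) ^ ((1:ℤ) - (m:ℤ))) * n m v := by ring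
    _ = 2 * C ^ 2 * (N : ℝ) ^ ((3:ℤ) - (m:ℤ)) * n m v := by rw [pow2]
  have hA' : n 2 (uN N - v) ≤ C * (N : ℝ) ^ ((3:ℤ) - (m:ℤ)) * n m v := by
    refine hA.trans ?_
    have : C * (N : ℝ) ^ ((2:ℤ) - (m:ℤ)) ≤ C * (N : ℝ) ^ ((3:ℤ) - (m:ℤ)) :=
      mul_le_mul_of_nonneg_left pow1 hC.le
    exact mul_le_mul_of_nonneg_right this hnv
  calc n 2 (v - vbar N) ≤ n 2 (uN N - v) + n 2 (uN N - vbar N) := key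
  _ ≤ C * (N : ℝ) ^ ((3:ℤ) - (m:ℤ)) * n m v + 2 * C ^ 2 * (N : ℝ) ^ ((3:ℤ) - (m:ℤ)) * n m v := add_le_add hA' hB'
  _ = (C + 2 * C ^ 2) * (N : ℝ) ^ ((3:ℤ) - (m:ℤ)) * n m v := by ring
end

section
/- Suppose a bilinear form A is coercive on a Hilbert space V with constant C₂, and suppose ξ : [0,T] → V is C¹ with ξ(0) = 0 and A(ξ'(t), ψ) = −(B(v^N(t),ψ) − B(v(t),ψ)) for all ψ in a subspace, where |B(v^N,ψ) − B(v,ψ)| ≤ C‖e^N‖_V‖ψ‖_V and e^N = η − ξ. Then ‖ξ'(t)‖_V ≤ (C/C₂)‖e^N(t)‖_V, and consequently ‖ξ(t)‖_V ≤ C'∫₀^t (‖ξ(s)‖_V + ‖η(s)‖_V) ds, whence by Gronwall ‖ξ(t)‖_V ≤ C' e^{C't} ∫₀^t ‖η(s)‖_V ds. -/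
/-!
Testing the Galerkin identity with `ψ = ξ'(t)` and using coercivity gives
`C₂‖ξ'‖² ≤ C‖η - ξ‖‖ξ'‖`, hence the pointwise bound on `ξ'`. Integrating it, by a fencing
argument since `V` need not be complete, bounds `‖ξ‖` by `C'∫(‖ξ‖ + ‖η‖)`. The primitive
`F(s) = ∫₀ˢ ‖ξ‖` then satisfies `F' ≤ C'F + C'∫₀ᵗ ‖η‖` on `[0, t]`, and the differential Gronwall
inequality for `F` yields the exponential bound.
-/

open Set Real MeasureTheory intervalIntegral

theorem norm_le_div_of_mul_norm_sq_le {E : Type*} [SeminormedAddCommGroup E] {x : E} {c M : ℝ}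
    (hc : 0 < c) (hM : 0 ≤ M) (h : c * ‖x‖ ^ 2 ≤ M * ‖x‖) : ‖x‖ ≤ M / c := by
  rcases (norm_nonneg x).eq_or_lt with hx | hx
  · rw [← hx]
    positivity
  · rw [le_div_iff₀ hc]
    nlinarith

section Primitive

variable {E : Type*} [NormedAddCommGroup E] [NormedSpace ℝ E] {g : ℝ → E} {a b : ℝ}

theorem continuousOn_primitive_of_continuousOn (hab : a ≤ b) (hg : ContinuousOn g (Icc a b)) :
    ContinuousOn (fun x => ∫ t in a..x, g t) (Icc a b) := by
  simpa only [uIcc_of_le hab] using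
    continuousOn_primitive_interval' (hg.intervalIntegrable_of_Icc hab) left_mem_uIcc

theorem hasDerivWithinAt_primitive_Ici_of_continuousOn [CompleteSpace E] {x : ℝ}
    (hg : ContinuousOn g (Icc a b)) (hx : x ∈ Ico a b) :
    HasDerivWithinAt (fun t => ∫ s in a..t, g s) (g x) (Ici x) x := by
  -- the `FTCFilter` instance for `𝓝[Icc a b] x` needs this fact
  have : Fact (x ∈ Icc a b) := ⟨Ico_subset_Icc_self hx⟩
  have hint : IntervalIntegrable g volume a x :=
    (hg.mono (Icc_subset_Icc_right hx.2.le)).intervalIntegrable_of_Icc hx.1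
  exact (integral_hasDerivWithinAt_right hint
    (hg.stronglyMeasurableAtFilter_nhdsWithin measurableSet_Icc x)
    (hg x (Ico_subset_Icc_self hx))).mono_of_mem_nhdsWithin (Icc_mem_nhdsGE_of_mem hx)

end Primitive

theorem norm_image_le_add_integral_of_norm_deriv_right_le {E : Type*} [NormedAddCommGroup E]
    [NormedSpace ℝ E] {f f' : ℝ → E} {g : ℝ → ℝ} {a b : ℝ} (hf : ContinuousOn f (Icc a b))
    (hf' : ∀ x ∈ Ico a b, HasDerivWithinAt f (f' x) (Ici x) x) (hg : ContinuousOn g (Icc a b))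
    (bound : ∀ x ∈ Ico a b, ‖f' x‖ ≤ g x) :
    ∀ x ∈ Icc a b, ‖f x‖ ≤ ‖f a‖ + ∫ t in a..x, g t := fun x hx =>
  image_norm_le_of_norm_deriv_right_le_deriv_boundary' hf hf' (by simp)
    (continuousOn_const.add (continuousOn_primitive_of_continuousOn (hx.1.trans hx.2) hg))
    (fun y hy => (hasDerivWithinAt_primitive_Ici_of_continuousOn hg hy).const_add _) bound hx

theorem gronwallBound_zero_mul_add (K ε x : ℝ) :
    K * gronwallBound 0 K ε x + ε = ε * exp (K * x) := by
  rcases eq_or_ne K 0 with rfl | hK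
  · simp
  · rw [gronwallBound_of_K_ne_0 hK]
    field_simp
    ring

theorem le_mul_exp_of_le_mul_integral_add {u : ℝ → ℝ} {K c a b : ℝ} (hK : 0 ≤ K)
    (hu : ContinuousOn u (Icc a b)) (bound : ∀ x ∈ Icc a b, u x ≤ K * (∫ t in a..x, u t) + c) :
    ∀ x ∈ Icc a b, u x ≤ c * exp (K * (x - a)) := by
  intro x hx
  have hFx : ∫ t in a..x, u t ≤ gronwallBound 0 K c (x - a) :=
    le_gronwallBound_of_liminf_deriv_right_le
      (continuousOn_primitive_of_continuousOn (hx.1.trans hx.2) hu)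
      (fun y hy _ hr =>
        (hasDerivWithinAt_primitive_Ici_of_continuousOn hu hy).liminf_right_slope_le hr)
      (by simp) (fun y hy => bound y (Ico_subset_Icc_self hy)) x hx
  calc u x ≤ K * (∫ t in a..x, u t) + c := bound x hx
    _ ≤ K * gronwallBound 0 K c (x - a) + c := by gcongr
    _ = c * exp (K * (x - a)) := gronwallBound_zero_mul_add K c (x - a)

theorem le_mul_exp_mul_integral_of_le_mul_integral_add {u v : ℝ → ℝ} {K a b : ℝ} (hK : 0 ≤ K)
    (hab : a ≤ b) (hu : ContinuousOn u (Icc a b)) (hv : ContinuousOn v (Icc a b))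
    (hv₀ : ∀ x ∈ Icc a b, 0 ≤ v x) (bound : ∀ x ∈ Icc a b, u x ≤ K * ∫ t in a..x, (u t + v t)) :
    u b ≤ K * exp (K * (b - a)) * ∫ t in a..b, v t := by
  have bound' : ∀ x ∈ Icc a b, u x ≤ K * (∫ t in a..x, u t) + K * ∫ t in a..b, v t := by
    intro x hx
    have hsub : Icc a x ⊆ Icc a b := Icc_subset_Icc_right hx.2
    have hv_mono : ∫ t in a..x, v t ≤ ∫ t in a..b, v t :=
      integral_mono_interval le_rfl hx.1 hx.2
        ((ae_restrict_iff' measurableSet_Ioc).2 <|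
          .of_forall fun t ht => hv₀ t (Ioc_subset_Icc_self ht))
        (hv.intervalIntegrable_of_Icc hab)
    calc u x ≤ K * ∫ t in a..x, (u t + v t) := bound x hx
      _ = K * (∫ t in a..x, u t) + K * ∫ t in a..x, v t := by
        rw [integral_add ((hu.mono hsub).intervalIntegrable_of_Icc hx.1)
          ((hv.mono hsub).intervalIntegrable_of_Icc hx.1), mul_add]
      _ ≤ K * (∫ t in a..x, u t) + K * ∫ t in a..b, v t := by gcongr
  calc u b ≤ (K * ∫ t in a..b, v t) * exp (K * (b - a)) :=
        le_mul_exp_of_le_mul_integral_add hK hu bound' b ⟨hab, le_rfl⟩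
    _ = K * exp (K * (b - a)) * ∫ t in a..b, v t := by ring

theorem stmt9_general {V : Type*} [NormedAddCommGroup V] [InnerProductSpace ℝ V]
    (T C C₂ : ℝ) (hC : 0 < C) (hC₂ : 0 < C₂)
    (A : V → V → ℝ) (S : Submodule ℝ V)
    (hcoer : ∀ φ : V, C₂ * ‖φ‖ ^ 2 ≤ A φ φ)
    (ξ ξ' η : ℝ → V) (D : ℝ → V → ℝ)
    (hηcont : ContinuousOn η (Set.Icc 0 T))
    (hderiv : ∀ t ∈ Set.Icc (0:ℝ) T, HasDerivAt ξ (ξ' t) t)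
    (hξ0 : ξ 0 = 0)
    (hmem : ∀ t ∈ Set.Icc (0:ℝ) T, ξ' t ∈ S)
    (hA : ∀ t ∈ Set.Icc (0:ℝ) T, ∀ ψ ∈ S, A (ξ' t) ψ = -(D t ψ))
    (hD : ∀ t ∈ Set.Icc (0:ℝ) T, ∀ ψ : V, |D t ψ| ≤ C * ‖η t - ξ t‖ * ‖ψ‖) :
    (∀ t ∈ Set.Icc (0:ℝ) T, ‖ξ' t‖ ≤ (C / C₂) * ‖η t - ξ t‖) ∧
    ∃ C' : ℝ, 0 < C' ∧
      (∀ t ∈ Set.Icc (0:ℝ) T, ‖ξ t‖ ≤ C' * ∫ s in (0:ℝ)..t, (‖ξ s‖ + ‖η s‖)) ∧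
      (∀ t ∈ Set.Icc (0:ℝ) T,
        ‖ξ t‖ ≤ C' * Real.exp (C' * t) * ∫ s in (0:ℝ)..t, ‖η s‖) := by
  have hC' : 0 < C / C₂ := div_pos hC hC₂
  have hξcont : ContinuousOn ξ (Icc 0 T) := fun t ht =>
    (hderiv t ht).continuousAt.continuousWithinAt
  have hderiv_le : ∀ t ∈ Icc (0:ℝ) T, ‖ξ' t‖ ≤ C / C₂ * ‖η t - ξ t‖ := by
    intro t ht
    rw [← mul_div_right_comm]
    refine norm_le_div_of_mul_norm_sq_le hC₂ (by positivity) ?_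
    calc C₂ * ‖ξ' t‖ ^ 2 ≤ A (ξ' t) (ξ' t) := hcoer _
      _ = -D t (ξ' t) := hA t ht _ (hmem t ht)
      _ ≤ |D t (ξ' t)| := neg_le_abs _
      _ ≤ C * ‖η t - ξ t‖ * ‖ξ' t‖ := hD t ht _
  have hξ_le : ∀ t ∈ Icc (0:ℝ) T, ‖ξ t‖ ≤ C / C₂ * ∫ s in (0:ℝ)..t, (‖ξ s‖ + ‖η s‖) := by
    intro t ht
    have := norm_image_le_add_integral_of_norm_deriv_right_le
      (g := fun s => C / C₂ * (‖ξ s‖ + ‖η s‖)) hξcont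
      (fun s hs => (hderiv s (Ico_subset_Icc_self hs)).hasDerivWithinAt)
      (continuousOn_const.mul (hξcont.norm.add hηcont.norm))
      (fun s hs => (hderiv_le s (Ico_subset_Icc_self hs)).trans <|
        mul_le_mul_of_nonneg_left ((norm_sub_le _ _).trans_eq (add_comm _ _)) hC'.le) t ht
    rwa [hξ0, norm_zero, zero_add, intervalIntegral.integral_const_mul] at this
  refine ⟨hderiv_le, C / C₂, hC', hξ_le, fun t ht => ?_⟩
  have hsub : Icc 0 t ⊆ Icc 0 T := Icc_subset_Icc_right ht.2
  simpa using le_mul_exp_mul_integral_of_le_mul_integral_add hC'.le ht.1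
    (hξcont.norm.mono hsub) (hηcont.norm.mono hsub) (fun _ _ => norm_nonneg _)
    (fun s hs => hξ_le s (hsub hs))

/-- abstract error propagation: if `A` is coercive on `V` with constant
`C₂`, `ξ` is `C¹` with `ξ(0) = 0`, `A(ξ'(t),ψ) = −(B(v^N,ψ) − B(v,ψ)) =: −D(t,ψ)` for
`ψ` in a subspace `S`, and `|D(t,ψ)| ≤ C‖e^N(t)‖‖ψ‖` with `e^N = η − ξ`, then
`‖ξ'(t)‖ ≤ (C/C₂)‖e^N(t)‖`, hence `‖ξ(t)‖ ≤ C'∫₀ᵗ(‖ξ‖+‖η‖)` and, by Gronwall,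
`‖ξ(t)‖ ≤ C' e^{C't} ∫₀ᵗ ‖η‖`. -/
theorem stmt9 {V : Type*} [NormedAddCommGroup V] [InnerProductSpace ℝ V]
    (T C C₂ : ℝ) (hT : 0 < T) (hC : 0 < C) (hC₂ : 0 < C₂)
    (A : V → V → ℝ) (S : Submodule ℝ V)
    (hcoer : ∀ φ : V, C₂ * ‖φ‖ ^ 2 ≤ A φ φ)
    (ξ ξ' η : ℝ → V) (D : ℝ → V → ℝ)
    (hηcont : ContinuousOn η (Set.Icc 0 T))
    (hderiv : ∀ t ∈ Set.Icc (0:ℝ) T, HasDerivAt ξ (ξ' t) t)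
    (hξ'cont : ContinuousOn ξ' (Set.Icc 0 T))
    (hξ0 : ξ 0 = 0)
    (hmem : ∀ t ∈ Set.Icc (0:ℝ) T, ξ' t ∈ S)
    (hA : ∀ t ∈ Set.Icc (0:ℝ) T, ∀ ψ ∈ S, A (ξ' t) ψ = -(D t ψ))
    (hD : ∀ t ∈ Set.Icc (0:ℝ) T, ∀ ψ : V, |D t ψ| ≤ C * ‖η t - ξ t‖ * ‖ψ‖) :
    (∀ t ∈ Set.Icc (0:ℝ) T, ‖ξ' t‖ ≤ (C / C₂) * ‖η t - ξ t‖) ∧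
    ∃ C' : ℝ, 0 < C' ∧
      (∀ t ∈ Set.Icc (0:ℝ) T, ‖ξ t‖ ≤ C' * ∫ s in (0:ℝ)..t, (‖ξ s‖ + ‖η s‖)) ∧
      (∀ t ∈ Set.Icc (0:ℝ) T,
        ‖ξ t‖ ≤ C' * Real.exp (C' * t) * ∫ s in (0:ℝ)..t, ‖η s‖) :=
  stmt9_general T C C₂ hC hC₂ A S hcoer ξ ξ' η D hηcont hderiv hξ0 hmem hA hD
end
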